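/- Let q, r be real numbers with q ≥ 3 and r ≥ 4, let λ = λ(3,q,r), and let A, B be the SL(2,ℝ) matrices associated to (3,q,r). Then tr(BA⁻¹) = 2(cos(π/q) + cos(π/r)) ≥ 1 + √2 > 2; in particular the element BA⁻¹ of the (3,q,r)-triangle group is hyperbolic. -/

import Mathlib

open Real Matrix

noncomputable def triE (p q r : ℝ) : ℝ :=
  Real.cos (π / r) + Real.cos (π / p) * Real.cos (π / q)

noncomputable def triLambda (p q r : ℝ) : ℝ :=
  (triE p q r +
      Real.sqrt ((triE p q r) ^ 2 - (Real.sin (π / p)) ^ 2 * (Real.sin (π / q)) ^ 2)) /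
    (Real.sin (π / p) * Real.sin (π / q))

noncomputable def triA (p : ℝ) : Matrix (Fin 2) (Fin 2) ℝ :=
  !![Real.cos (π / p), -Real.sin (π / p); Real.sin (π / p), Real.cos (π / p)]

noncomputable def triB (q lam : ℝ) : Matrix (Fin 2) (Fin 2) ℝ :=
  !![Real.cos (π / q), -lam⁻¹ * Real.sin (π / q); lam * Real.sin (π / q), Real.cos (π / q)]

/-!
`A⁻¹` is the rotation by `-π/p`, so `tr(BA⁻¹) = 2 cos(π/p) cos(π/q) + (λ + λ⁻¹) sin(π/p) sin(π/q)`.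
Since `λ` is a root of `s x² - 2 E x + s` with `s = sin(π/p) sin(π/q)`, the second term is `2E`,
and for `p = 3` the trace becomes `2(cos(π/q) + cos(π/r))`. The bound follows from
`cos(π/q) ≥ cos(π/3) = 1/2` and `cos(π/r) ≥ cos(π/4) = √2/2`.
-/

lemma triA_inv (p : ℝ) :
    (triA p)⁻¹ = !![Real.cos (π / p), Real.sin (π / p); -Real.sin (π / p), Real.cos (π / p)] := by
  have hdet : (triA p).det = 1 := by
    rw [triA, det_fin_two_of]
    linear_combination Real.sin_sq_add_cos_sq (π / p)
  rw [inv_def, hdet, Ring.inverse_one, one_smul, adjugate_fin_two, triA]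
  simp

lemma trace_triB_mul_triA_inv (p q lam : ℝ) :
    (triB q lam * (triA p)⁻¹).trace =
      2 * Real.cos (π / p) * Real.cos (π / q) +
        (lam + lam⁻¹) * (Real.sin (π / p) * Real.sin (π / q)) := by
  rw [triA_inv, triB, mul_fin_two, trace_fin_two_of]
  ring

/-- The other root of `s x² - 2 E x + s` is `x⁻¹ = (E - √(E² - s²)) / s`. -/
lemma add_inv_mul_of_eq_div {E s x : ℝ} (hs : 0 < s) (hsE : s ≤ E)
    (hx : x = (E + √(E ^ 2 - s ^ 2)) / s) : (x + x⁻¹) * s = 2 * E := by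
  have hD : 0 ≤ E ^ 2 - s ^ 2 := by nlinarith
  have hsum : 0 < E + √(E ^ 2 - s ^ 2) := add_pos_of_pos_of_nonneg (by linarith) (sqrt_nonneg _)
  have hinv : x⁻¹ = (E - √(E ^ 2 - s ^ 2)) / s := by
    rw [hx, inv_div, div_eq_div_iff hsum.ne' hs.ne']
    linear_combination Real.sq_sqrt hD
  rw [hinv, hx]
  field_simp
  ring

lemma triLambda_add_inv_mul {p q r : ℝ} (hs : 0 < Real.sin (π / p) * Real.sin (π / q))
    (hsE : Real.sin (π / p) * Real.sin (π / q) ≤ triE p q r) :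
    (triLambda p q r + (triLambda p q r)⁻¹) * (Real.sin (π / p) * Real.sin (π / q)) =
      2 * triE p q r :=
  add_inv_mul_of_eq_div hs hsE (by rw [triLambda, mul_pow])

/-- `E - sin(π/p) sin(π/q) = cos(π/r) + cos(π/p + π/q)`, which is positive exactly in the
hyperbolic case `π/p + π/q < π - π/r`. -/
lemma sin_mul_sin_lt_triE {p q r : ℝ} (hp : 0 < p) (hq : 0 < q) (hr : 0 < r)
    (hpqr : 1 / p + 1 / q + 1 / r < 1) :
    Real.sin (π / p) * Real.sin (π / q) < triE p q r := by
  have hangle : π / p + π / q < π - π / r := by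
    have := mul_lt_mul_of_pos_left hpqr pi_pos
    field_simp at this ⊢
    linarith
  have hcos : Real.cos (π - π / r) < Real.cos (π / p + π / q) :=
    cos_lt_cos_of_nonneg_of_le_pi (by positivity) (by linarith [div_pos pi_pos hr]) hangle
  rw [Real.cos_pi_sub, Real.cos_add] at hcos
  rw [triE]
  linarith

lemma sin_pi_div_pos {p : ℝ} (hp : 1 < p) : 0 < Real.sin (π / p) :=
  sin_pos_of_pos_of_lt_pi (div_pos pi_pos (by linarith)) (div_lt_self pi_pos hp)

lemma cos_pi_div_le_cos_pi_div {a b : ℝ} (ha : 1 ≤ a) (hab : a ≤ b) :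
    Real.cos (π / a) ≤ Real.cos (π / b) :=
  cos_le_cos_of_nonneg_of_le_pi (div_nonneg pi_pos.le (by linarith)) (div_le_self pi_pos.le ha)
    (div_le_div_of_nonneg_left pi_pos.le (by linarith) hab)

theorem stmt_9 (q r : ℝ) (hq : 3 ≤ q) (hr : 4 ≤ r) :
    (triB q (triLambda 3 q r) * (triA 3)⁻¹).trace =
        2 * (Real.cos (π / q) + Real.cos (π / r)) ∧
      1 + Real.sqrt 2 ≤ 2 * (Real.cos (π / q) + Real.cos (π / r)) ∧
      2 < 1 + Real.sqrt 2 := by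
  have hs : 0 < Real.sin (π / 3) * Real.sin (π / q) :=
    mul_pos (sin_pi_div_pos (by norm_num)) (sin_pi_div_pos (by linarith))
  have hpqr : 1 / 3 + 1 / q + 1 / r < 1 := by
    have : 1 / q ≤ 1 / 3 := one_div_le_one_div_of_le (by norm_num) hq
    have : 1 / r ≤ 1 / 4 := one_div_le_one_div_of_le (by norm_num) hr
    linarith
  have hsE := sin_mul_sin_lt_triE (by norm_num) (by linarith) (by linarith) hpqr
  have hcq : Real.cos (π / 3) ≤ Real.cos (π / q) := cos_pi_div_le_cos_pi_div (by norm_num) hq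
  have hcr : Real.cos (π / 4) ≤ Real.cos (π / r) := cos_pi_div_le_cos_pi_div (by norm_num) hr
  rw [cos_pi_div_three] at hcq
  rw [cos_pi_div_four] at hcr
  refine ⟨?_, by linarith, by linarith [one_lt_sqrt_two]⟩
  rw [trace_triB_mul_triA_inv, triLambda_add_inv_mul hs hsE.le, triE, cos_pi_div_three]
  ring
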